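/- Young's inequality for A-convolution: if f ∈ Lʳ(ℝ), g ∈ Lˢ(ℝ) and 1/r + 1/s = 1 + 1/t with 1 ≤ r, s, t ≤ ∞, then f ⋆_A g ∈ Lᵗ(ℝ) and ‖f ⋆_A g‖_t ≤ |b|^{−1/2} ‖f‖_r ‖g‖_s. -/

import Mathlib

/-!
The chirp factor `exp(-2πi (a/b) s (x - s))` has modulus one, so pointwise
`|f ⋆_A g| ≤ |b|^{-1/2} (|f| ∗ |g|)`, and the theorem reduces to Young's inequality for the
ordinary convolution of nonnegative functions. That inequality holds on any group whose measure
is invariant under left translation and inversion. For `t = ∞` it is Hölder's inequality at each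
point. For `t < ∞` write `F(y) H(x - y) = (F(y)^r H(x - y)^s)^{1/t} F(y)^{r(1/r - 1/t)}
H(x - y)^{s(1/s - 1/t)}`, apply Hölder with three exponents in `y`, raise to the power `t`, and
integrate in `x` using Tonelli.
-/

open MeasureTheory Complex ENNReal

/-- The A-convolution. -/
noncomputable def convA (a b : ℝ) (f g : ℝ → ℂ) (x : ℝ) : ℂ :=
  (1 / Real.sqrt |b|) *
    ∫ s : ℝ, f s *
      (Complex.exp (-2 * Real.pi * Complex.I * (a / b) * s * (x - s)) * g (x - s))

section Holder

variable {α : Type*} [MeasurableSpace α] {μ : Measure α}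

lemma lintegral_rpow_mul_rpow_mul_rpow_le {u v w : α → ℝ≥0∞} (hu : AEMeasurable u μ)
    (hv : AEMeasurable v μ) (hw : AEMeasurable w μ) {a b c : ℝ} (ha : 0 ≤ a) (hb : 0 ≤ b)
    (hc : 0 ≤ c) (habc : a + b + c = 1) :
    ∫⁻ x, u x ^ a * v x ^ b * w x ^ c ∂μ ≤
      (∫⁻ x, u x ∂μ) ^ a * (∫⁻ x, v x ∂μ) ^ b * (∫⁻ x, w x ∂μ) ^ c := by
  have h := ENNReal.lintegral_prod_norm_pow_le (μ := μ) Finset.univ (f := ![u, v, w])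
    (p := ![a, b, c]) (by simp [Fin.forall_fin_succ, hu, hv, hw])
    (by simpa [Fin.sum_univ_three] using habc) (by simp [Fin.forall_fin_succ, ha, hb, hc])
  simpa [Fin.prod_univ_three, mul_assoc] using h

lemma lintegral_mul_le_eLpNorm_mul_eLpNorm {p q : ℝ≥0∞} [p.HolderConjugate q]
    {F H : α → ℝ≥0∞} (hF : AEMeasurable F μ) (hH : AEMeasurable H μ) :
    ∫⁻ x, F x * H x ∂μ ≤ eLpNorm F p μ * eLpNorm H q μ := by
  have top_one : ∀ {F H : α → ℝ≥0∞}, AEMeasurable H μ →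
      ∫⁻ x, F x * H x ∂μ ≤ eLpNorm F ∞ μ * eLpNorm H 1 μ := fun {F H} hH => by
    simp only [eLpNorm_exponent_top, eLpNormEssSup, eLpNorm_one_eq_lintegral_enorm, enorm_eq_self]
    rw [← lintegral_const_mul'' _ hH]
    exact lintegral_mono_ae ((ENNReal.ae_le_essSup F).mono fun x hx => mul_le_mul_left hx _)
  obtain rfl | hp := eq_or_ne p ∞
  · obtain rfl : q = 1 := (HolderConjugate.eq_top_iff_eq_one ∞ q).1 rfl
    exact top_one hH
  obtain rfl | hq := eq_or_ne q ∞
  · obtain rfl : p = 1 := (HolderConjugate.eq_top_iff_eq_one ∞ p).1 rfl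
    simpa only [mul_comm] using top_one (F := H) hF
  rw [eLpNorm_eq_lintegral_rpow_enorm_toReal (HolderConjugate.ne_zero p q) hp,
    eLpNorm_eq_lintegral_rpow_enorm_toReal (HolderConjugate.ne_zero q p) hq]
  exact ENNReal.lintegral_mul_le_Lp_mul_Lq μ (HolderConjugate.toReal_of_ne_top hp hq) hF hH

end Holder

lemma ENNReal.mul_eq_rpow_mul_rpow_mul_rpow (u v : ℝ≥0∞) {r s t : ℝ} (hr : r ≠ 0) (hs : s ≠ 0)
    (ht : 0 < t) (hrt : 0 ≤ 1 / r - 1 / t) (hst : 0 ≤ 1 / s - 1 / t) :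
    u * v = (u ^ r * v ^ s) ^ (1 / t) * (u ^ r) ^ (1 / r - 1 / t) * (v ^ s) ^ (1 / s - 1 / t) := by
  have split (z : ℝ≥0∞) {p : ℝ} (hp : p ≠ 0) (hpt : 0 ≤ 1 / p - 1 / t) :
      (z ^ p) ^ (1 / t) * (z ^ p) ^ (1 / p - 1 / t) = z := by
    rw [← ENNReal.rpow_add_of_nonneg _ _ (by positivity) hpt, add_sub_cancel, ← ENNReal.rpow_mul,
      mul_one_div_cancel hp, ENNReal.rpow_one]
  rw [ENNReal.mul_rpow_of_nonneg _ _ (by positivity)]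
  calc u * v = (u ^ r) ^ (1 / t) * (u ^ r) ^ (1 / r - 1 / t) *
        ((v ^ s) ^ (1 / t) * (v ^ s) ^ (1 / s - 1 / t)) := by rw [split u hr hrt, split v hs hst]
    _ = _ := by ring

section Young

variable {G : Type*} [MeasurableSpace G] [AddGroup G] [MeasurableAdd₂ G] [MeasurableNeg G]
  {μ : Measure G} [μ.IsAddLeftInvariant] {F H : G → ℝ≥0∞}

lemma lintegral_lconvolution [SFinite μ] (hF : AEMeasurable F μ) (hH : AEMeasurable H μ) :
    ∫⁻ x, (F ⋆ₗ[μ] H) x ∂μ = (∫⁻ x, F x ∂μ) * ∫⁻ x, H x ∂μ := by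
  simp only [lconvolution_def]
  rw [lintegral_lintegral_swap (by fun_prop)]
  have hH_add (y : G) : AEMeasurable (fun x => H (-y + x)) μ :=
    hH.comp_quasiMeasurePreserving (measurePreserving_add_left μ (-y)).quasiMeasurePreserving
  simp_rw [lintegral_const_mul'' _ (hH_add _), lintegral_add_left_eq_self]
  exact lintegral_mul_const'' _ hF

variable [μ.IsNegInvariant]

variable (μ) in
lemma measurePreserving_neg_add (x : G) : MeasurePreserving (fun y => -y + x) μ μ := by
  simpa [Function.comp_def, neg_add_rev] using
    (Measure.measurePreserving_neg μ).comp (measurePreserving_add_left μ (-x))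

lemma lintegral_neg_add_eq_self (f : G → ℝ≥0∞) (x : G) :
    ∫⁻ y, f (-y + x) ∂μ = ∫⁻ y, f y ∂μ := by
  simpa [neg_add_rev] using
    (lintegral_add_left_eq_self (fun y => f (-y)) (-x)).trans (lintegral_neg_eq_self f)

lemma lconvolution_rpow_le {r s t : ℝ} (hF : AEMeasurable F μ) (hH : AEMeasurable H μ)
    (hr : 1 ≤ r) (hs : 1 ≤ s) (ht : 0 < t) (hrst : 1 / r + 1 / s = 1 + 1 / t) (x : G) :
    (F ⋆ₗ[μ] H) x ^ t ≤ ((F · ^ r) ⋆ₗ[μ] (H · ^ s)) x *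
      (∫⁻ y, F y ^ r ∂μ) ^ (t / r - 1) * (∫⁻ y, H y ^ s ∂μ) ^ (t / s - 1) := by
  have hr₀ : 0 < r := one_pos.trans_le hr
  have hs₀ : 0 < s := one_pos.trans_le hs
  have hr₁ : 1 / r ≤ 1 := (div_le_one hr₀).2 hr
  have hs₁ : 1 / s ≤ 1 := (div_le_one hs₀).2 hs
  have hp₁ : 0 ≤ 1 / r - 1 / t := by linarith
  have hp₂ : 0 ≤ 1 / s - 1 / t := by linarith
  have hHx : AEMeasurable (fun y => H (-y + x)) μ :=
    hH.comp_quasiMeasurePreserving (measurePreserving_neg_add μ x).quasiMeasurePreserving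
  have holder : (F ⋆ₗ[μ] H) x ≤ ((F · ^ r) ⋆ₗ[μ] (H · ^ s)) x ^ (1 / t) *
      (∫⁻ y, F y ^ r ∂μ) ^ (1 / r - 1 / t) * (∫⁻ y, H y ^ s ∂μ) ^ (1 / s - 1 / t) := by
    rw [← lintegral_neg_add_eq_self (H · ^ s) x, lconvolution_def, lconvolution_def]
    simp_rw [ENNReal.mul_eq_rpow_mul_rpow_mul_rpow (F _) (H _) hr₀.ne' hs₀.ne' ht hp₁ hp₂]
    exact lintegral_rpow_mul_rpow_mul_rpow_le ((hF.pow_const r).mul (hHx.pow_const s))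
      (hF.pow_const r) (hHx.pow_const s) (by positivity) hp₁ hp₂ (by linarith)
  calc (F ⋆ₗ[μ] H) x ^ t
      ≤ (((F · ^ r) ⋆ₗ[μ] (H · ^ s)) x ^ (1 / t) * (∫⁻ y, F y ^ r ∂μ) ^ (1 / r - 1 / t) *
          (∫⁻ y, H y ^ s ∂μ) ^ (1 / s - 1 / t)) ^ t := ENNReal.rpow_le_rpow holder ht.le
    _ = _ := by
      rw [ENNReal.mul_rpow_of_nonneg _ _ ht.le, ENNReal.mul_rpow_of_nonneg _ _ ht.le,
        ← ENNReal.rpow_mul, ← ENNReal.rpow_mul, ← ENNReal.rpow_mul]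
      congr 2
      · rw [one_div_mul_cancel ht.ne', ENNReal.rpow_one]
      all_goals field_simp

lemma lintegral_lconvolution_rpow_le [SFinite μ] {r s t : ℝ} (hF : AEMeasurable F μ)
    (hH : AEMeasurable H μ) (hr : 1 ≤ r) (hs : 1 ≤ s) (ht : 0 < t)
    (hrst : 1 / r + 1 / s = 1 + 1 / t) :
    ∫⁻ x, (F ⋆ₗ[μ] H) x ^ t ∂μ ≤ (∫⁻ y, F y ^ r ∂μ) ^ (t / r) * (∫⁻ y, H y ^ s ∂μ) ^ (t / s) := by
  set A := ∫⁻ y, F y ^ r ∂μ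
  set B := ∫⁻ y, H y ^ s ∂μ
  have hr₀ : 0 < r := one_pos.trans_le hr
  have hs₀ : 0 < s := one_pos.trans_le hs
  have hrt : 0 ≤ t / r - 1 := by
    rw [sub_nonneg, one_le_div hr₀, ← one_div_le_one_div ht hr₀]
    linarith [(div_le_one hs₀).2 hs]
  have hst : 0 ≤ t / s - 1 := by
    rw [sub_nonneg, one_le_div hs₀, ← one_div_le_one_div ht hs₀]
    linarith [(div_le_one hr₀).2 hr]
  calc ∫⁻ x, (F ⋆ₗ[μ] H) x ^ t ∂μ
      ≤ ∫⁻ x, ((F · ^ r) ⋆ₗ[μ] (H · ^ s)) x * (A ^ (t / r - 1) * B ^ (t / s - 1)) ∂μ :=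
        lintegral_mono fun x => (lconvolution_rpow_le hF hH hr hs ht hrst x).trans_eq (mul_assoc ..)
    _ = A * B * (A ^ (t / r - 1) * B ^ (t / s - 1)) := by
        rw [lintegral_mul_const'' _ (aemeasurable_lconvolution (hF.pow_const r) (hH.pow_const s)),
          lintegral_lconvolution (hF.pow_const r) (hH.pow_const s)]
    _ = A ^ (1 + (t / r - 1)) * B ^ (1 + (t / s - 1)) := by
        rw [ENNReal.rpow_add_of_nonneg _ _ zero_le_one hrt,
          ENNReal.rpow_add_of_nonneg _ _ zero_le_one hst, ENNReal.rpow_one, ENNReal.rpow_one]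
        ring
    _ = A ^ (t / r) * B ^ (t / s) := by simp only [add_sub_cancel]

lemma lconvolution_le_eLpNorm_mul_eLpNorm {r s : ℝ≥0∞} [r.HolderConjugate s]
    (hF : AEMeasurable F μ) (hH : AEMeasurable H μ) (x : G) :
    (F ⋆ₗ[μ] H) x ≤ eLpNorm F r μ * eLpNorm H s μ := by
  have hx := measurePreserving_neg_add μ x
  calc (F ⋆ₗ[μ] H) x ≤ eLpNorm F r μ * eLpNorm (H ∘ fun y => -y + x) s μ :=
        lintegral_mul_le_eLpNorm_mul_eLpNorm hF
          (hH.comp_quasiMeasurePreserving hx.quasiMeasurePreserving)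
    _ = eLpNorm F r μ * eLpNorm H s μ := by
        rw [eLpNorm_comp_measurePreserving hH.aestronglyMeasurable hx]

lemma eLpNorm_lconvolution_le_of_ne_top [SFinite μ] {r s t : ℝ≥0∞} (hF : AEMeasurable F μ)
    (hH : AEMeasurable H μ) (hr : 1 ≤ r) (hs : 1 ≤ s) (hrst : 1 / r + 1 / s = 1 + 1 / t)
    (hr_top : r ≠ ∞) (hs_top : s ≠ ∞) (ht₀ : t ≠ 0) (ht_top : t ≠ ∞) :
    eLpNorm (F ⋆ₗ[μ] H) t μ ≤ eLpNorm F r μ * eLpNorm H s μ := by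
  have hr₀ : r ≠ 0 := (one_pos.trans_le hr).ne'
  have hs₀ : s ≠ 0 := (one_pos.trans_le hs).ne'
  have hrst' : 1 / r.toReal + 1 / s.toReal = 1 + 1 / t.toReal := by
    simpa [ENNReal.toReal_add, hr₀, hs₀, ht₀] using congrArg ENNReal.toReal hrst
  have ht' : 0 < t.toReal := ENNReal.toReal_pos ht₀ ht_top
  rw [eLpNorm_eq_lintegral_rpow_enorm_toReal ht₀ ht_top,
    eLpNorm_eq_lintegral_rpow_enorm_toReal hr₀ hr_top,
    eLpNorm_eq_lintegral_rpow_enorm_toReal hs₀ hs_top]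
  simp only [enorm_eq_self]
  calc (∫⁻ x, (F ⋆ₗ[μ] H) x ^ t.toReal ∂μ) ^ (1 / t.toReal)
      ≤ ((∫⁻ y, F y ^ r.toReal ∂μ) ^ (t.toReal / r.toReal) *
          (∫⁻ y, H y ^ s.toReal ∂μ) ^ (t.toReal / s.toReal)) ^ (1 / t.toReal) := by
        gcongr
        exact lintegral_lconvolution_rpow_le hF hH (by simpa using ENNReal.toReal_mono hr_top hr)
          (by simpa using ENNReal.toReal_mono hs_top hs) ht' hrst'
    _ = (∫⁻ y, F y ^ r.toReal ∂μ) ^ (1 / r.toReal) * (∫⁻ y, H y ^ s.toReal ∂μ) ^ (1 / s.toReal) := by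
        rw [ENNReal.mul_rpow_of_nonneg _ _ (by positivity), ← ENNReal.rpow_mul, ← ENNReal.rpow_mul]
        congr 2 <;> field_simp

theorem eLpNorm_lconvolution_le [SFinite μ] {r s t : ℝ≥0∞} (hF : AEMeasurable F μ)
    (hH : AEMeasurable H μ) (hr : 1 ≤ r) (hs : 1 ≤ s) (hrst : 1 / r + 1 / s = 1 + 1 / t) :
    eLpNorm (F ⋆ₗ[μ] H) t μ ≤ eLpNorm F r μ * eLpNorm H s μ := by
  obtain rfl | ht_top := eq_or_ne t ∞
  · have : r.HolderConjugate s := by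
      rw [ENNReal.holderConjugate_iff]; simpa using hrst
    rw [eLpNorm_exponent_top]
    exact essSup_le_of_ae_le _ (.of_forall (lconvolution_le_eLpNorm_mul_eLpNorm hF hH))
  have hr₁ : 1 / r ≤ 1 := by simpa using ENNReal.inv_le_one.2 hr
  have hs₁ : 1 / s ≤ 1 := by simpa using ENNReal.inv_le_one.2 hs
  have ht₀ : t ≠ 0 := by
    rintro rfl
    have : 1 / r + 1 / s ≤ 2 := by simpa [one_add_one_eq_two] using add_le_add hr₁ hs₁
    rw [hrst] at this
    simp at this
  have one_lt : 1 < 1 + 1 / t := ENNReal.lt_add_right one_ne_top (by simpa using ht_top)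
  have hr_top : r ≠ ∞ := by
    rintro rfl
    rw [ENNReal.div_top, zero_add] at hrst
    exact (hs₁.trans_lt (hrst ▸ one_lt)).false
  have hs_top : s ≠ ∞ := by
    rintro rfl
    rw [ENNReal.div_top, add_zero] at hrst
    exact (hr₁.trans_lt (hrst ▸ one_lt)).false
  exact eLpNorm_lconvolution_le_of_ne_top hF hH hr hs hrst hr_top hs_top ht₀ ht_top

end Young

lemma enorm_exp_chirp (a b x y : ℝ) :
    ‖Complex.exp (-2 * Real.pi * Complex.I * (a / b) * y * (x - y))‖ₑ = 1 := by
  have : -2 * Real.pi * Complex.I * (a / b) * y * (x - y) =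
      ((-2 * Real.pi * (a / b) * y * (x - y) : ℝ) : ℂ) * I := by
    push_cast; ring
  rw [this, ← ofReal_norm, Complex.norm_exp_ofReal_mul_I, ENNReal.ofReal_one]

lemma enorm_convA_le (a b : ℝ) (f g : ℝ → ℂ) (x : ℝ) :
    ‖convA a b f g x‖ₑ ≤ ENNReal.ofReal (1 / Real.sqrt |b|) * ((‖f ·‖ₑ) ⋆ₗ (‖g ·‖ₑ)) x := by
  rw [convA, enorm_mul]
  gcongr
  · rw [← ofReal_norm]; simp [abs_of_nonneg (Real.sqrt_nonneg _)]
  · refine (enorm_integral_le_lintegral_enorm _).trans_eq (lintegral_congr fun y => ?_)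
    rw [enorm_mul, enorm_mul, enorm_exp_chirp, one_mul, neg_add_eq_sub]

lemma aestronglyMeasurable_convA (a b : ℝ) {f g : ℝ → ℂ} (hf : AEStronglyMeasurable f)
    (hg : AEStronglyMeasurable g) : AEStronglyMeasurable (convA a b f g) := by
  have hchirp : Continuous fun p : ℝ × ℝ =>
      Complex.exp (-2 * Real.pi * Complex.I * (a / b) * p.2 * (p.1 - p.2)) := by fun_prop
  have hkernel := (hf.comp_snd (μ := volume)).mul (hchirp.aestronglyMeasurable.mul
    (hg.comp_quasiMeasurePreserving (quasiMeasurePreserving_sub volume volume)))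
  exact hkernel.integral_prod_right'.const_mul _

theorem young_A_convolution_general (a b : ℝ) (r s t : ℝ≥0∞)
    (hr : 1 ≤ r) (hs : 1 ≤ s)
    (hrst : 1 / r + 1 / s = 1 + 1 / t)
    (f g : ℝ → ℂ) (hf : MemLp f r volume) (hg : MemLp g s volume) :
    MemLp (convA a b f g) t volume ∧
      eLpNorm (convA a b f g) t volume ≤
        ENNReal.ofReal (1 / Real.sqrt |b|) * eLpNorm f r volume * eLpNorm g s volume := by
  have hbound : eLpNorm (convA a b f g) t volume ≤
      ENNReal.ofReal (1 / Real.sqrt |b|) * eLpNorm f r volume * eLpNorm g s volume :=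
    calc eLpNorm (convA a b f g) t volume
        ≤ ENNReal.ofReal (1 / Real.sqrt |b|) * eLpNorm ((‖f ·‖ₑ) ⋆ₗ (‖g ·‖ₑ)) t volume :=
          eLpNorm_le_nnreal_smul_eLpNorm_of_ae_le_mul' (.of_forall (enorm_convA_le a b f g)) t
      _ ≤ ENNReal.ofReal (1 / Real.sqrt |b|) *
            (eLpNorm (‖f ·‖ₑ) r volume * eLpNorm (‖g ·‖ₑ) s volume) := by
          gcongr
          exact eLpNorm_lconvolution_le hf.1.enorm hg.1.enorm hr hs hrst
      _ = _ := by rw [eLpNorm_enorm, eLpNorm_enorm, mul_assoc]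
  refine ⟨⟨aestronglyMeasurable_convA a b hf.1 hg.1, hbound.trans_lt ?_⟩, hbound⟩
  exact ENNReal.mul_lt_top (ENNReal.mul_lt_top ofReal_lt_top hf.2) hg.2

/-- Young's inequality for the A-convolution. -/
theorem young_A_convolution (a b : ℝ) (hb : b ≠ 0) (r s t : ℝ≥0∞)
    (hr : 1 ≤ r) (hs : 1 ≤ s) (ht : 1 ≤ t)
    (hrst : 1 / r + 1 / s = 1 + 1 / t)
    (f g : ℝ → ℂ) (hf : MemLp f r volume) (hg : MemLp g s volume) :
    MemLp (convA a b f g) t volume ∧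
      eLpNorm (convA a b f g) t volume ≤
        ENNReal.ofReal (1 / Real.sqrt |b|) * eLpNorm f r volume * eLpNorm g s volume :=
  young_A_convolution_general a b r s t hr hs hrst f g hf hg
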